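/- arXiv:2404.06306 — 2 statements merged into one kernel-verified Lean document; each statement's English description precedes it below -/
import Mathlib

section
/- Every nontrivial zero ρ of the Riemann zeta function satisfies |Im ρ| > 2π. -/
/-!
In the critical strip, `Λ₀(s) = Λ(s) + 1/s + 1/(1-s)` is half the Mellin transform at `s/2` of
`θ(x) - 1` on `(1, ∞)` and of `x^{-1/2}(θ(1/x) - 1)` on `(0, 1)`, where `θ = evenKernel 0`.
Inverting `x` on `(0, 1)`, both pieces are bounded by `∫₁^∞ x^{-1/2}(θ(x) - 1) dx`, and
`θ(x) - 1 ≈ 2e^{-πx}`. An explicit antiderivative bounds `∫₁^∞ x^{-1/2} e^{-πx} dx ≤ 0.283 e^{-π}`,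
so `|Λ₀(s)| < 1/40` for `0 ≤ Re s ≤ 1`. At a nontrivial zero `Λ(ρ) = 0`, so `Λ₀(ρ) ρ(1-ρ) = 1`
and `|ρ(1-ρ)| > 40`; but `|Im ρ| ≤ 2π` would give `|ρ(1-ρ)|² ≤ 1/16 + 4π² + 16π⁴ < 1600`.
-/

open Complex Real

/-- A nontrivial zero of the Riemann zeta function: a point of the open critical strip
where `ζ` vanishes. -/
def NontrivialZero (ρ : ℂ) : Prop := 0 < ρ.re ∧ ρ.re < 1 ∧ riemannZeta ρ = 0

open HurwitzZeta MeasureTheory Set Filter Topology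

theorem integral_Ioo_zero_one_comp_inv {E : Type*} [NormedAddCommGroup E] [NormedSpace ℝ E]
    (g : ℝ → E) : ∫ x in Ioo 0 1, g x = ∫ x in Ioi 1, (x ^ 2)⁻¹ • g x⁻¹ := by
  have himage : Inv.inv '' Ioi (1 : ℝ) = Ioo 0 1 := by
    rw [image_inv_eq_inv, inv_Ioi₀ one_pos, inv_one]
  rw [← himage, integral_image_eq_integral_abs_deriv_smul measurableSet_Ioi
    (fun x hx ↦ (hasDerivAt_inv (by linarith [mem_Ioi.mp hx] : x ≠ 0)).hasDerivWithinAt)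
    inv_injective.injOn]
  refine setIntegral_congr_fun measurableSet_Ioi fun x _ ↦ ?_
  simp

theorem integral_Ioi_le_of_hasDerivAt_of_le {f g g' : ℝ → ℝ} {a l : ℝ}
    (hderiv : ∀ x ∈ Ici a, HasDerivAt g (g' x) x) (hf : ∀ x ∈ Ioi a, 0 ≤ f x)
    (hfg : ∀ x ∈ Ioi a, f x ≤ g' x) (hg : Tendsto g atTop (𝓝 l)) :
    ∫ x in Ioi a, f x ≤ l - g a := by
  have hg' : ∀ x ∈ Ioi a, 0 ≤ g' x := fun x hx ↦ (hf x hx).trans (hfg x hx)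
  rw [← integral_Ioi_of_hasDerivAt_of_nonneg' hderiv hg' hg]
  exact setIntegral_mono_of_nonneg hf hfg (integrableOn_Ioi_deriv_of_nonneg' hderiv hg' hg)

lemma hasSum_evenKernel_zero_sub_one {x : ℝ} (hx : 0 < x) :
    HasSum (fun n : ℕ ↦ 2 * rexp (-π * (n + 1) ^ 2 * x)) (evenKernel 0 x - 1) := by
  simpa [← evenKernel_eq_cosKernel_of_zero] using hasSum_nat_cosKernel₀ 0 hx

lemma evenKernel_zero_sub_one_nonneg {x : ℝ} (hx : 0 < x) : 0 ≤ evenKernel 0 x - 1 :=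
  (hasSum_evenKernel_zero_sub_one hx).nonneg fun _ ↦ by positivity

lemma exp_neg_two_pi_lt_one : rexp (-(2 * π)) < 1 :=
  Real.exp_lt_one_iff.mpr (by linarith [pi_pos])

lemma evenKernel_zero_sub_one_le {x : ℝ} (hx : 1 ≤ x) :
    evenKernel 0 x - 1 ≤ 2 * (1 - rexp (-(2 * π)))⁻¹ * rexp (-π * x) := by
  have hgeom := (hasSum_geometric_of_lt_one (exp_nonneg _) exp_neg_two_pi_lt_one).mul_left
    (2 * rexp (-π * x))
  rw [show 2 * (1 - rexp (-(2 * π)))⁻¹ * rexp (-π * x)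
    = 2 * rexp (-π * x) * (1 - rexp (-(2 * π)))⁻¹ by ring]
  refine hasSum_le (fun n ↦ ?_) (hasSum_evenKernel_zero_sub_one (by linarith)) hgeom
  rw [← Real.exp_nat_mul, mul_assoc 2, ← Real.exp_add]
  gcongr
  have : x + 2 * n ≤ (n + 1) ^ 2 * x := by
    nlinarith [mul_nonneg n.cast_nonneg (sub_nonneg.mpr hx),
      mul_nonneg (sq_nonneg (n : ℝ)) (zero_le_one.trans hx)]
  nlinarith [pi_pos]

lemma rpow_mul_evenKernel_zero_sub_one_le {x a : ℝ} (hx : 1 ≤ x) (ha : a ≤ -1 / 2) :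
    x ^ a * (evenKernel 0 x - 1)
      ≤ 2 * (1 - rexp (-(2 * π)))⁻¹ * (x ^ (-1 / 2 : ℝ) * rexp (-π * x)) := by
  calc x ^ a * (evenKernel 0 x - 1)
      ≤ x ^ (-1 / 2 : ℝ) * (2 * (1 - rexp (-(2 * π)))⁻¹ * rexp (-π * x)) :=
        mul_le_mul (rpow_le_rpow_of_exponent_le hx ha) (evenKernel_zero_sub_one_le hx)
          (evenKernel_zero_sub_one_nonneg (by linarith)) (by positivity)
    _ = _ := by ring

lemma hurwitzEvenFEPair_zero_f_modif_of_one_lt {x : ℝ} (hx : 1 < x) :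
    (hurwitzEvenFEPair 0).f_modif x = ↑(evenKernel 0 x - 1) := by
  simp [WeakFEPair.f_modif, hx, hurwitzEvenFEPair, notMem_Ioo_of_ge hx.le]

lemma hurwitzEvenFEPair_zero_f_modif_inv {x : ℝ} (hx : 1 < x) :
    (hurwitzEvenFEPair 0).f_modif x⁻¹ = ↑(x ^ (1 / 2 : ℝ) * (evenKernel 0 x - 1)) := by
  rw [← one_div, (hurwitzEvenFEPair 0).hf_modif_FE x (by linarith)]
  simp [WeakFEPair.g_modif, hx, hurwitzEvenFEPair, notMem_Ioo_of_ge hx.le,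
    evenKernel_eq_cosKernel_of_zero]

lemma integrableOn_rpow_neg_half_mul_exp :
    IntegrableOn (fun x : ℝ ↦ x ^ (-1 / 2 : ℝ) * rexp (-π * x)) (Ioi 1) := by
  have := integrableOn_rpow_mul_exp_neg_mul_rpow (s := -1 / 2) (by norm_num) one_pos pi_pos
  simp only [rpow_one] at this
  exact this.mono_set (Ioi_subset_Ioi zero_le_one)

lemma norm_cpow_smul_f_modif_le {s : ℂ} (hs1 : s.re ≤ 1) {x : ℝ} (hx : 1 < x) :
    ‖(x : ℂ) ^ (s / 2 - 1) • (hurwitzEvenFEPair 0).f_modif x‖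
      ≤ 2 * (1 - rexp (-(2 * π)))⁻¹ * (x ^ (-1 / 2 : ℝ) * rexp (-π * x)) := by
  have hx0 : 0 < x := by linarith
  rw [norm_smul, norm_cpow_eq_rpow_re_of_pos hx0, hurwitzEvenFEPair_zero_f_modif_of_one_lt hx,
    norm_real, Real.norm_of_nonneg (evenKernel_zero_sub_one_nonneg hx0)]
  exact rpow_mul_evenKernel_zero_sub_one_le hx.le (by simp; linarith)

lemma inv_sq_mul_norm_cpow_smul_f_modif_inv_le {s : ℂ} (hs0 : 0 ≤ s.re) {x : ℝ} (hx : 1 < x) :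
    (x ^ 2)⁻¹ * ‖((x⁻¹ : ℝ) : ℂ) ^ (s / 2 - 1) • (hurwitzEvenFEPair 0).f_modif x⁻¹‖
      ≤ 2 * (1 - rexp (-(2 * π)))⁻¹ * (x ^ (-1 / 2 : ℝ) * rexp (-π * x)) := by
  have hx0 : 0 < x := by linarith
  rw [norm_smul, norm_cpow_eq_rpow_re_of_pos (inv_pos.mpr hx0),
    hurwitzEvenFEPair_zero_f_modif_inv hx, norm_real,
    Real.norm_of_nonneg (mul_nonneg (by positivity) (evenKernel_zero_sub_one_nonneg hx0))]
  have hpow : (x ^ 2)⁻¹ * (x⁻¹ ^ (s.re / 2 - 1) * x ^ (1 / 2 : ℝ))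
      = x ^ (-s.re / 2 - 1 / 2) := by
    rw [inv_rpow hx0.le, ← rpow_neg hx0.le, ← rpow_natCast, ← rpow_neg hx0.le,
      ← rpow_add hx0, ← rpow_add hx0]
    norm_num
    ring_nf
  calc (x ^ 2)⁻¹ * (x⁻¹ ^ (s / 2 - 1).re * (x ^ (1 / 2 : ℝ) * (evenKernel 0 x - 1)))
      = x ^ (-s.re / 2 - 1 / 2) * (evenKernel 0 x - 1) := by rw [← hpow]; simp; ring
    _ ≤ _ := rpow_mul_evenKernel_zero_sub_one_le hx.le (by linarith)

lemma norm_completedRiemannZeta₀_le {s : ℂ} (hs0 : 0 ≤ s.re) (hs1 : s.re ≤ 1) :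
    ‖completedRiemannZeta₀ s‖ ≤
      2 * (1 - rexp (-(2 * π)))⁻¹ * ∫ x in Ioi 1, x ^ (-1 / 2 : ℝ) * rexp (-π * x) := by
  set c := 2 * (1 - rexp (-(2 * π)))⁻¹
  set F : ℝ → ℂ := fun t ↦ (t : ℂ) ^ (s / 2 - 1) • (hurwitzEvenFEPair 0).f_modif t
  have hF : IntegrableOn F (Ioi 0) :=
    ((hurwitzEvenFEPair 0).isStrongFEPair_toStrongFEPair.hasMellin (s / 2)).1
  have hφ : IntegrableOn (fun x ↦ c * (x ^ (-1 / 2 : ℝ) * rexp (-π * x))) (Ioi 1) :=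
    integrableOn_rpow_neg_half_mul_exp.const_mul c
  have hsplit : ∫ x in Ioi 0, ‖F x‖ = (∫ x in Ioo 0 1, ‖F x‖) + ∫ x in Ioi 1, ‖F x‖ := by
    rw [← Ioo_union_Ici_eq_Ioi one_pos, setIntegral_union
      ((Iio_disjoint_Ici le_rfl).mono_left Ioo_subset_Iio_self) measurableSet_Ici
      (IntegrableOn.mono_set hF.norm Ioo_subset_Ioi_self)
      (IntegrableOn.mono_set hF.norm (Ici_subset_Ioi.mpr one_pos)), integral_Ici_eq_integral_Ioi]
  have hlow : ∫ x in Ioo 0 1, ‖F x‖ ≤ ∫ x in Ioi 1, c * (x ^ (-1 / 2 : ℝ) * rexp (-π * x)) := by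
    rw [integral_Ioo_zero_one_comp_inv]
    exact setIntegral_mono_of_nonneg (fun x _ ↦ by positivity)
      (fun x hx ↦ inv_sq_mul_norm_cpow_smul_f_modif_inv_le hs0 hx) hφ
  have hhigh : ∫ x in Ioi 1, ‖F x‖ ≤ ∫ x in Ioi 1, c * (x ^ (-1 / 2 : ℝ) * rexp (-π * x)) :=
    setIntegral_mono_of_nonneg (fun x _ ↦ norm_nonneg _)
      (fun x hx ↦ norm_cpow_smul_f_modif_le hs1 hx) hφ
  calc ‖completedRiemannZeta₀ s‖ = ‖∫ x in Ioi 0, F x‖ / 2 := by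
        rw [show completedRiemannZeta₀ s = (∫ x in Ioi 0, F x) / 2 from rfl, norm_div,
          Complex.norm_ofNat]
    _ ≤ (∫ x in Ioi 0, ‖F x‖) / 2 := by gcongr; exact norm_integral_le_integral_norm F
    _ ≤ ((∫ x in Ioi 1, c * (x ^ (-1 / 2 : ℝ) * rexp (-π * x)))
          + ∫ x in Ioi 1, c * (x ^ (-1 / 2 : ℝ) * rexp (-π * x))) / 2 := by
        rw [hsplit]; gcongr
    _ = c * ∫ x in Ioi 1, x ^ (-1 / 2 : ℝ) * rexp (-π * x) := by
        rw [integral_const_mul]; ring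

/- The first three coefficients are those of the asymptotic expansion of
`e^{πx} ∫_x^∞ t^{-1/2} e^{-πt} dt` in powers of `x^{-1/2}`. The last one, `-0.009` in place of
`-15/(8π⁴) ≈ -0.0192`, is small enough in size for the derivative of `-e^{-πx} tailPoly (x^{-1/2})` to dominate
`x^{-1/2} e^{-πx}` for `x ≥ 1`, and large enough for `tailPoly 1 ≤ 0.283`. -/
noncomputable def tailPoly (y : ℝ) : ℝ :=
  y / π - y ^ 3 / (2 * π ^ 2) + 3 * y ^ 5 / (4 * π ^ 3) - 0.009 * y ^ 7

lemma hasDerivAt_tailPoly (y : ℝ) :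
    HasDerivAt tailPoly
      (1 / π - 3 * y ^ 2 / (2 * π ^ 2) + 15 * y ^ 4 / (4 * π ^ 3) - 0.063 * y ^ 6) y := by
  have h := ((((hasDerivAt_id y).div_const π).sub ((hasDerivAt_pow 3 y).div_const (2 * π ^ 2))).add
    (((hasDerivAt_pow 5 y).const_mul 3).div_const (4 * π ^ 3))).sub
    ((hasDerivAt_pow 7 y).const_mul 0.009)
  refine h.congr_deriv ?_
  norm_num
  ring

lemma hasDerivAt_neg_exp_mul_tailPoly {x : ℝ} (hx : 0 < x) :
    HasDerivAt (fun x ↦ -(rexp (-π * x) * tailPoly (x ^ (-1 / 2 : ℝ))))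
      (rexp (-π * x) * (x ^ (-1 / 2 : ℝ) + (x ^ (-1 / 2 : ℝ)) ^ 7 *
        (15 / (8 * π ^ 3) - 0.009 * π - 0.0315 * (x ^ (-1 / 2 : ℝ)) ^ 2))) x := by
  have hexp : HasDerivAt (fun x ↦ rexp (-π * x)) (rexp (-π * x) * -π) x :=
    ((hasDerivAt_id x).const_mul (-π)).exp.congr_deriv (by simp)
  have hy := hasDerivAt_rpow_const (p := -1 / 2) (Or.inl hx.ne')
  have hy3 : x ^ (-1 / 2 - 1 : ℝ) = (x ^ (-1 / 2 : ℝ)) ^ 3 := by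
    rw [← rpow_natCast, ← rpow_mul hx.le]; norm_num
  refine (hexp.mul ((hasDerivAt_tailPoly _).comp x hy)).neg.congr_deriv ?_
  rw [hy3, Function.comp_apply]
  simp only [tailPoly]
  field_simp
  ring

lemma tendsto_neg_exp_mul_tailPoly :
    Tendsto (fun x ↦ -(rexp (-π * x) * tailPoly (x ^ (-1 / 2 : ℝ)))) atTop (𝓝 0) := by
  have hexp : Tendsto (fun x ↦ rexp (-π * x)) atTop (𝓝 0) :=
    tendsto_exp_atBot.comp (tendsto_id.const_mul_atTop_of_neg (neg_lt_zero.mpr pi_pos))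
  have hy : Tendsto (fun x : ℝ ↦ x ^ (-1 / 2 : ℝ)) atTop (𝓝 0) := by
    simpa [neg_div] using tendsto_rpow_neg_atTop (by norm_num : (0 : ℝ) < 1 / 2)
  have hpoly : Tendsto (fun x ↦ tailPoly (x ^ (-1 / 2 : ℝ))) atTop (𝓝 (tailPoly 0)) :=
    (hasDerivAt_tailPoly 0).continuousAt.tendsto.comp hy
  have h0 : tailPoly 0 = 0 := by norm_num [tailPoly]
  simpa [h0] using (hexp.mul hpoly).neg

lemma tailPoly_one_le : tailPoly 1 ≤ 0.283 := by
  have h1 : 3.1415 < π := pi_gt_d4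
  have h2 : π < 3.1416 := pi_lt_d4
  have hu : 1 / π < 0.31832 := by rw [div_lt_iff₀ pi_pos]; nlinarith
  have hu' : 0.3183 < 1 / π := by rw [lt_div_iff₀ pi_pos]; nlinarith
  have : tailPoly 1 = 1 / π - (1 / π) ^ 2 / 2 + 3 * (1 / π) ^ 3 / 4 - 0.009 := by
    simp only [tailPoly]; ring
  rw [this]
  nlinarith

lemma tailPoly_coeff_nonneg {y : ℝ} (hy0 : 0 ≤ y) (hy1 : y ≤ 1) :
    0 ≤ 15 / (8 * π ^ 3) - 0.009 * π - 0.0315 * y ^ 2 := by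
  have h1 : 3.14 < π := pi_gt_d2
  have h2 : π < 3.15 := pi_lt_d2
  have h3 : π ^ 3 < 31.26 := (pow_lt_pow_left₀ h2 pi_pos.le three_ne_zero).trans (by norm_num)
  have h4 : 15 / 31.26 / 8 ≤ 15 / (8 * π ^ 3) := by
    rw [div_div, div_le_div_iff_of_pos_left (by norm_num) (by norm_num) (by positivity)]; linarith
  nlinarith

lemma integral_rpow_neg_half_mul_exp_le :
    ∫ x in Ioi 1, x ^ (-1 / 2 : ℝ) * rexp (-π * x) ≤ 0.283 * rexp (-π) := by
  refine (integral_Ioi_le_of_hasDerivAt_of_le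
    (fun x hx ↦ hasDerivAt_neg_exp_mul_tailPoly (zero_lt_one.trans_le hx))
    (fun x hx ↦ mul_nonneg (rpow_nonneg (zero_le_one.trans hx.le) _) (exp_pos _).le)
    (fun x hx ↦ ?_) tendsto_neg_exp_mul_tailPoly).trans ?_
  · have hx : 1 < x := hx
    have hy0 : 0 ≤ x ^ (-1 / 2 : ℝ) := by positivity
    have hy1 : x ^ (-1 / 2 : ℝ) ≤ 1 := rpow_le_one_of_one_le_of_nonpos hx.le (by norm_num)
    rw [mul_comm]
    gcongr
    have := tailPoly_coeff_nonneg hy0 hy1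
    nlinarith [pow_nonneg hy0 7]
  · simp only [one_rpow, mul_one, zero_sub, neg_neg]
    rw [mul_comm]
    gcongr
    exact tailPoly_one_le

lemma exp_neg_pi_lt : rexp (-π) < 0.044 := by
  have he : 2.718 < rexp 1 := lt_trans (by norm_num) exp_one_gt_d9
  have hπ : 3.14 < π := pi_gt_d2
  have : rexp π = rexp 1 ^ 3 * rexp (π - 3) := by
    rw [← Real.exp_nat_mul, ← Real.exp_add]; norm_num
  have h3 : (2.718 : ℝ) ^ 3 < rexp 1 ^ 3 := by gcongr
  have : 22.73 < rexp π := by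
    rw [this]
    nlinarith [add_one_le_exp (π - 3), exp_pos (π - 3)]
  rw [Real.exp_neg, inv_lt_comm₀ (exp_pos π) (by norm_num)]
  linarith

lemma two_mul_inv_one_sub_exp_mul_lt :
    2 * (1 - rexp (-(2 * π)))⁻¹ * (0.283 * rexp (-π)) < 1 / 40 := by
  have he := exp_neg_pi_lt
  have he0 := exp_pos (-π)
  have h2 : rexp (-(2 * π)) = rexp (-π) ^ 2 := by rw [← Real.exp_nat_mul]; ring_nf
  rw [h2, ← div_eq_mul_inv, div_mul_eq_mul_div, div_lt_iff₀ (by nlinarith)]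
  nlinarith

lemma norm_completedRiemannZeta₀_lt {s : ℂ} (hs0 : 0 ≤ s.re) (hs1 : s.re ≤ 1) :
    ‖completedRiemannZeta₀ s‖ < 1 / 40 := by
  have hc : 0 ≤ 2 * (1 - rexp (-(2 * π)))⁻¹ :=
    mul_nonneg zero_le_two (inv_nonneg.mpr (sub_nonneg.mpr exp_neg_two_pi_lt_one.le))
  calc ‖completedRiemannZeta₀ s‖
      ≤ 2 * (1 - rexp (-(2 * π)))⁻¹ * ∫ x in Ioi 1, x ^ (-1 / 2 : ℝ) * rexp (-π * x) :=
        norm_completedRiemannZeta₀_le hs0 hs1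
    _ ≤ 2 * (1 - rexp (-(2 * π)))⁻¹ * (0.283 * rexp (-π)) := by
        gcongr; exact integral_rpow_neg_half_mul_exp_le
    _ < 1 / 40 := two_mul_inv_one_sub_exp_mul_lt

lemma completedRiemannZeta₀_mul_eq_one {s : ℂ} (hs0 : 0 < s.re) (hs1 : s ≠ 1)
    (hζ : riemannZeta s = 0) : completedRiemannZeta₀ s * (s * (1 - s)) = 1 := by
  have hs : s ≠ 0 := fun h ↦ by simp [h] at hs0
  have hΛ : completedRiemannZeta s = 0 := by
    rw [riemannZeta_def_of_ne_zero hs, div_eq_zero_iff] at hζ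
    exact hζ.resolve_right (Gammaℝ_ne_zero_of_re_pos hs0)
  rw [completedRiemannZeta_eq] at hΛ
  have h1s : 1 - s ≠ 0 := sub_ne_zero.mpr hs1.symm
  field_simp at hΛ ⊢
  linear_combination hΛ

lemma norm_mul_one_sub_sq_le {s : ℂ} (hs0 : 0 ≤ s.re) (hs1 : s.re ≤ 1) :
    ‖s * (1 - s)‖ ^ 2 ≤ 1 / 16 + s.im ^ 2 + s.im ^ 4 := by
  rw [norm_mul, mul_pow, Complex.sq_norm, Complex.sq_norm, normSq_apply, normSq_apply]
  simp only [sub_re, one_re, sub_im, one_im, zero_sub]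
  have h1 : (s.re * (1 - s.re)) ^ 2 ≤ 1 / 16 := by
    nlinarith [sq_nonneg (s.re - 1 / 2), mul_nonneg hs0 (sub_nonneg.mpr hs1)]
  have h2 : s.im ^ 2 * (s.re ^ 2 + (1 - s.re) ^ 2) ≤ s.im ^ 2 :=
    mul_le_of_le_one_right (sq_nonneg _) (by nlinarith)
  nlinarith

lemma norm_mul_one_sub_lt_forty {s : ℂ} (hs0 : 0 ≤ s.re) (hs1 : s.re ≤ 1)
    (him : |s.im| ≤ 2 * π) : ‖s * (1 - s)‖ < 40 := by
  have hπ : π ^ 2 < 9.87 := by nlinarith [pi_lt_d4, pi_pos]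
  have hγ : s.im ^ 2 ≤ 39.48 := by nlinarith [sq_abs s.im, abs_nonneg s.im]
  have hsq : ‖s * (1 - s)‖ ^ 2 < 40 ^ 2 := by
    nlinarith [norm_mul_one_sub_sq_le hs0 hs1, sq_nonneg s.im]
  exact lt_of_pow_lt_pow_left₀ 2 (by norm_num) hsq

theorem im_of_nontrivial_zero_gt_two_pi (ρ : ℂ) (hρ : NontrivialZero ρ) :
    2 * π < |ρ.im| := by
  obtain ⟨hre0, hre1, hζ⟩ := hρ
  by_contra! him
  have hρ1 : ρ ≠ 1 := fun h ↦ by simp [h] at hre1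
  have hone : ‖completedRiemannZeta₀ ρ‖ * ‖ρ * (1 - ρ)‖ = 1 := by
    rw [← norm_mul, completedRiemannZeta₀_mul_eq_one hre0 hρ1 hζ, norm_one]
  have hprod := norm_mul_one_sub_lt_forty hre0.le hre1.le him
  nlinarith [norm_completedRiemannZeta₀_lt hre0.le hre1.le, norm_nonneg (completedRiemannZeta₀ ρ)]
end

section
/- For all real numbers δ, β, z with 0 < δ < ½, β > 2π and 0 < z < 2π², setting μ = (½ − 2δ² + 2β²)/((¼ + δ² + β²)² − δ²) and ν = 1/((¼ + δ² + β²)² − δ²), one has 0 < μ·z − ν·z² < 1. -/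
/-!
Write `a = 1/4 - δ² + β²`. The common denominator is a sum of two squares,
`(1/4 + δ² + β²)² - δ² = a² + (2δβ)²`, over which `μz - νz² = (2az - z²) / (a² + (2δβ)²)`
with `2az - z² = a² - (z - a)²`. So it is below `a² / (a² + (2δβ)²) < 1`, and it is positive
because `0 < z < 2π² < 2β² < 2a`.
-/

open Real

section OrderedField

variable {K : Type*} [Field K] [LinearOrder K] [IsStrictOrderedRing K]

theorem two_mul_mul_sub_sq_le_sq (a z : K) : 2 * a * z - z ^ 2 ≤ a ^ 2 := by
  nlinarith [sq_nonneg (z - a)]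

theorem two_mul_mul_sub_sq_div_sq_add_sq_mem_Ioo {a c z : K} (hc : c ≠ 0) (hz : 0 < z)
    (hza : z < 2 * a) : (2 * a * z - z ^ 2) / (a ^ 2 + c ^ 2) ∈ Set.Ioo 0 1 := by
  have hden : 0 < a ^ 2 + c ^ 2 := by positivity
  refine ⟨div_pos ?_ hden, (div_lt_one hden).2 ?_⟩
  · nlinarith [mul_pos hz (sub_pos.2 hza)]
  · linarith [two_mul_mul_sub_sq_le_sq a z, sq_pos_of_ne_zero hc]

end OrderedField

theorem mu_z_sub_nu_z_sq_bounds (δ β z : ℝ) (hδ0 : 0 < δ) (hδ1 : δ < 1 / 2)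
    (hβ : 2 * π < β) (hz0 : 0 < z) (hz1 : z < 2 * π ^ 2) :
    0 < ((1 / 2 - 2 * δ ^ 2 + 2 * β ^ 2) / ((1 / 4 + δ ^ 2 + β ^ 2) ^ 2 - δ ^ 2)) * z -
        (1 / ((1 / 4 + δ ^ 2 + β ^ 2) ^ 2 - δ ^ 2)) * z ^ 2 ∧
      ((1 / 2 - 2 * δ ^ 2 + 2 * β ^ 2) / ((1 / 4 + δ ^ 2 + β ^ 2) ^ 2 - δ ^ 2)) * z -
        (1 / ((1 / 4 + δ ^ 2 + β ^ 2) ^ 2 - δ ^ 2)) * z ^ 2 < 1 := by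
  have hπ : 0 < π := pi_pos
  have hβ0 : 0 < β := by linarith
  have hδsq : δ ^ 2 < 1 / 4 := by nlinarith
  have hβsq : (2 * π) ^ 2 < β ^ 2 := pow_lt_pow_left₀ hβ (by positivity) two_ne_zero
  have hza : z < 2 * (1 / 4 - δ ^ 2 + β ^ 2) := by linarith [sq_nonneg π]
  have hform : ((1 / 2 - 2 * δ ^ 2 + 2 * β ^ 2) / ((1 / 4 + δ ^ 2 + β ^ 2) ^ 2 - δ ^ 2)) * z -
        (1 / ((1 / 4 + δ ^ 2 + β ^ 2) ^ 2 - δ ^ 2)) * z ^ 2 =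
      (2 * (1 / 4 - δ ^ 2 + β ^ 2) * z - z ^ 2) /
        ((1 / 4 - δ ^ 2 + β ^ 2) ^ 2 + (2 * δ * β) ^ 2) := by
    ring
  rw [hform]
  exact two_mul_mul_sub_sq_div_sq_add_sq_mem_Ioo (by positivity) hz0 hza
end
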